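/- Let v < w be π-minuscule elements for a dominant integral weight π, let W_P = Stab_W(π), and consider the Λ-Bruhat graph on [v,w]^P with constant admissible function Λ ≡ π. Then: (1) every edge x → y with x W_P < y W_P = x s_γ W_P has Chevalley multiplicity m_π(x,y) = ⟨π, γ∨⟩ = 1; (2) for every vertex x, the weight W_π(x) = x(π) − w(π) equals the sum β_1 + ⋯ + β_s of the edge roots along any directed chain x = x_0 →β_1 x_1 → ⋯ →β_s x_s = w in the graph; (3) the weight function W_π is injective on [v,w]^P. -/

import Mathlib

open scoped Classical BigOperators

/-- A bundled setting for a finite crystallographic root system together with its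
Weyl group, its action on the rational span of the weight lattice, reflections,
and the data of coefficients of roots in the basis of simple roots. -/
structure WeylSetting where
  /-- index set of the Dynkin diagram (simple roots) -/
  I : Type
  [fintypeI : Fintype I]
  [decEqI : DecidableEq I]
  /-- rational span of the weight lattice -/
  V : Type
  [acg : AddCommGroup V]
  [mod : Module ℚ V]
  /-- the Weyl group -/
  W : Type
  [grp : Group W]
  /-- the action of the Weyl group on weights -/
  act : W →* (V ≃ₗ[ℚ] V)
  /-- the simple roots -/
  simple : I → V
  /-- the (finite) set of roots -/
  roots : Finset V
  /-- `coroot β μ` is the pairing `⟨μ, β∨⟩` -/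
  coroot : V → (V →ₗ[ℚ] ℚ)
  /-- the reflection `s_β ∈ W` associated to a root `β` -/
  srefl : V → W
  /-- coefficients of a positive root in the basis of simple roots -/
  posCoeff : V → I → ℕ
  simple_mem : ∀ i, simple i ∈ roots
  simple_indep : LinearIndependent ℚ simple
  roots_neg : ∀ β ∈ roots, -β ∈ roots
  root_pos_or_neg : ∀ β ∈ roots,
    (∃ c : I → ℚ, (∀ i, 0 ≤ c i) ∧ β = ∑ i, c i • simple i) ∨
    (∃ c : I → ℚ, (∀ i, 0 ≤ c i) ∧ -β = ∑ i, c i • simple i)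
  coroot_self : ∀ β ∈ roots, coroot β β = 2
  crystallographic : ∀ β ∈ roots, ∀ γ ∈ roots, ∃ n : ℤ, coroot β γ = n
  posCoeff_spec : ∀ β ∈ roots,
    (∃ c : I → ℚ, (∀ i, 0 ≤ c i) ∧ β = ∑ i, c i • simple i) →
    β = ∑ i, (posCoeff β i : ℚ) • simple i
  srefl_apply : ∀ β ∈ roots, ∀ v : V, act (srefl β) v = v - coroot β v • β
  act_faithful : ∀ g : W, (∀ v : V, act g v = v) → g = 1
  roots_invariant : ∀ g : W, ∀ β ∈ roots, act g β ∈ roots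
  coroot_equivariant : ∀ g : W, ∀ β ∈ roots, ∀ v : V,
    coroot (act g β) (act g v) = coroot β v
  generated : ∀ g : W, ∃ l : List I, g = (l.map fun i => srefl (simple i)).prod

namespace WeylSetting

attribute [instance] fintypeI decEqI acg mod grp

variable (D : WeylSetting)

/-- the simple reflection attached to a node of the Dynkin diagram -/
def s (i : D.I) : D.W := D.srefl (D.simple i)

/-- the product `s_{i_1} ⋯ s_{i_r}` of the simple reflections listed in `l` -/
def wordProd (l : List D.I) : D.W := (l.map D.s).prod

/-- `β` is a positive root: a root which is a nonnegative combination of simple roots -/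
def IsPosRoot (β : D.V) : Prop :=
  β ∈ D.roots ∧ ∃ c : D.I → ℚ, (∀ i, 0 ≤ c i) ∧ β = ∑ i, c i • D.simple i

/-- the length of a Weyl group element -/
noncomputable def length (g : D.W) : ℕ :=
  sInf {n | ∃ l : List D.I, l.length = n ∧ D.wordProd l = g}

/-- `l` is a reduced word for `g` -/
def IsReduced (l : List D.I) (g : D.W) : Prop :=
  D.wordProd l = g ∧ l.length = D.length g

/-- the number of reduced words of `g` -/
noncomputable def RedCard (g : D.W) : ℕ := Nat.card {l : List D.I // D.IsReduced l g}

/-- the (strong) Bruhat order on the Weyl group -/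
def bruhatLE : D.W → D.W → Prop :=
  Relation.ReflTransGen
    (fun a b => (∃ β, D.IsPosRoot β ∧ b = D.srefl β * a) ∧ D.length a < D.length b)

/-- strict (strong) Bruhat order -/
def bruhatLT (a b : D.W) : Prop := D.bruhatLE a b ∧ a ≠ b

/-- the left weak Bruhat order: `a ≤_L b` iff `ℓ(b a⁻¹) + ℓ(a) = ℓ(b)` -/
def weakLE (a b : D.W) : Prop := D.length (b * a⁻¹) + D.length a = D.length b

/-- the height of a positive root: the sum of its coefficients in the simple roots -/
noncomputable def ht (β : D.V) : ℕ := ∑ i, D.posCoeff β i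

/-- an integral weight: the pairings with all positive coroots are integers -/
def IsIntegral (lam : D.V) : Prop :=
  ∀ β, D.IsPosRoot β → ∃ n : ℤ, D.coroot β lam = n

/-- a dominant integral weight -/
def IsDominant (lam : D.V) : Prop :=
  D.IsIntegral lam ∧ ∀ i, 0 ≤ D.coroot (D.simple i) lam

/-- a pre-dominant integral weight: `⟨λ, β∨⟩ ≥ -1` for all positive roots `β` -/
def IsPreDominant (lam : D.V) : Prop :=
  D.IsIntegral lam ∧ ∀ β, D.IsPosRoot β → -1 ≤ D.coroot β lam

/-- the diagram `D(λ) = {β ∈ R⁺ : ⟨λ, β∨⟩ = -1}` of a pre-dominant weight -/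
noncomputable def diagram (lam : D.V) : Finset D.V :=
  D.roots.filter fun β => D.IsPosRoot β ∧ D.coroot β lam = -1

/-- `IsWeightPath λ [β₁, …, β_r]` says that
`λ = λ₀ →β₁ λ₁ →β₂ ⋯ →β_r λ_r` is a `λ`-path, i.e. each `β_j` is a positive
root, `⟨λ_{j-1}, β_j∨⟩ = -1` and `λ_j = s_{β_j}(λ_{j-1})`. -/
def IsWeightPath : D.V → List D.V → Prop
  | _, [] => True
  | lam, β :: rest =>
      D.IsPosRoot β ∧ D.coroot β lam = -1 ∧
        IsWeightPath (D.act (D.srefl β) lam) rest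

/-- the term `1/β₁ ⋅ 1/(β₁+β₂) ⋅ … ⋅ 1/(β₁+⋯+β_r)` attached to a path
`(β₁, …, β_r)`, computed in a field `F` via a linear embedding `emb`. -/
noncomputable def pathTerm {F : Type} [Field F] [Algebra ℚ F]
    (emb : D.V →ₗ[ℚ] F) (l : List D.V) : F :=
  ∏ j ∈ Finset.range l.length, (emb ((l.take (j + 1)).sum))⁻¹

/-- `w` is a π-minuscule element (in the sense of Peterson). -/
def IsMinuscule (pi : D.V) (w : D.W) : Prop :=
  ∃ l : List D.I, D.IsReduced l w ∧
    ∀ k : Fin l.length,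
      D.coroot (D.simple (l.get k)) (D.act (D.wordProd (l.drop (k.val + 1))) pi) = 1

/-- the stabilizer `W_π = Stab_W(π)` of a weight -/
def stab (pi : D.V) : Subgroup D.W where
  carrier := {g | D.act g pi = pi}
  one_mem' := by simp
  mul_mem' := by
    intro a b ha hb
    simp only [Set.mem_setOf_eq] at *
    calc D.act (a * b) pi = D.act a (D.act b pi) := by rw [map_mul]; rfl
    _ = pi := by rw [hb, ha]
  inv_mem' := by
    intro a ha
    simp only [Set.mem_setOf_eq] at *
    calc D.act a⁻¹ pi = D.act a⁻¹ (D.act a pi) := by rw [ha]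
    _ = D.act (a⁻¹ * a) pi := by rw [map_mul]; rfl
    _ = pi := by simp

/-- `u` is the minimal-length representative of its coset `uH` -/
def IsMinRep (H : Subgroup D.W) (u : D.W) : Prop :=
  ∀ g : D.W, u⁻¹ * g ∈ H → D.length u ≤ D.length g

/-- `a` and `b` lie in the same coset of `H`, i.e. `aH = bH` -/
def SameCoset (H : Subgroup D.W) (a b : D.W) : Prop := a⁻¹ * b ∈ H

/-- `u →β w` in `W^P`: `β` is a positive root, `u, w` are minimal-length
representatives, `s_β w H = u H`, and `u < w` in Bruhat order -/
def Arrow (H : Subgroup D.W) (u w : D.W) (β : D.V) : Prop :=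
  D.IsPosRoot β ∧ D.IsMinRep H u ∧ D.IsMinRep H w ∧
    D.SameCoset H (D.srefl β * w) u ∧ D.bruhatLT u w

/-- `ArrowPath H w [β₁, …, β_r]` encodes a directed path
`x_r →β_r ⋯ → x_1 →β₁ x_0 = w` in the Bruhat graph on `W^P`. -/
def ArrowPath (H : Subgroup D.W) : D.W → List D.V → Prop
  | _, [] => True
  | w, β :: rest => ∃ u, D.Arrow H u w β ∧ ArrowPath H u rest

/-- directed paths as above whose vertices all lie above `v` in Bruhat order -/
def ArrowPathGE (H : Subgroup D.W) (v : D.W) : D.W → List D.V → Prop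
  | _, [] => True
  | w, β :: rest => ∃ u, D.Arrow H u w β ∧ D.bruhatLE v u ∧ ArrowPathGE H v u rest

/-- directed paths from `u` to `w`:
`u = x_r →β_r ⋯ → x_1 →β₁ x_0 = w` encoded by the list `[β₁, …, β_r]`. -/
def ArrowPathFromTo (H : Subgroup D.W) (u : D.W) : D.W → List D.V → Prop
  | w, [] => u = w
  | w, β :: rest => ∃ x, D.Arrow H x w β ∧ ArrowPathFromTo H u x rest

/-- `S(w) = {β ∈ R⁺ : s_β w < w}` -/
noncomputable def Sset (w : D.W) : Finset D.V :=
  D.roots.filter fun β => D.IsPosRoot β ∧ D.bruhatLT (D.srefl β * w) w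

/-- `S(w/v) = {β ∈ R⁺ : v ≤ s_β w < w}` -/
noncomputable def SsetSkew (v w : D.W) : Finset D.V :=
  D.roots.filter fun β =>
    D.IsPosRoot β ∧ D.bruhatLE v (D.srefl β * w) ∧ D.bruhatLT (D.srefl β * w) w

/-- an oriented edge `x → y` in the Bruhat graph of `G/P`: `x, y` are minimal
representatives, `xH < yH`, and `yH = x s_γ H` for some positive root `γ` -/
def GEdge (H : Subgroup D.W) (x y : D.W) : Prop :=
  D.IsMinRep H x ∧ D.IsMinRep H y ∧ D.bruhatLT x y ∧
    ∃ γ, D.IsPosRoot γ ∧ D.SameCoset H (x * D.srefl γ) y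

/-- the (unique) positive root `γ` with `yH = x s_γ H` attached to an edge -/
noncomputable def edgeRoot (H : Subgroup D.W) (x y : D.W) : D.V :=
  if h : ∃ γ, D.IsPosRoot γ ∧ D.SameCoset H (x * D.srefl γ) y then h.choose else 0

/-- `GChainTo H v t [x₁, …, x_r]` encodes a directed path
`v ≤ x_r → ⋯ → x_1 → x_0 = t` in the Bruhat graph of `G/P` -/
def GChainTo (H : Subgroup D.W) (v : D.W) : D.W → List D.W → Prop
  | _, [] => True
  | t, x :: rest => D.GEdge H x t ∧ D.bruhatLE v x ∧ GChainTo H v x rest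

/-- the weighted term
`(m_Λ(x_r,x_{r-1})/W_Λ(x_r)) ⋯ (m_Λ(x_1,x_0)/W_Λ(x_1))` of a path in the
`Λ`-Bruhat graph, computed in a field `F` via a linear embedding `emb`. -/
noncomputable def chainTerm {F : Type} [Field F] [Algebra ℚ F]
    (emb : D.V →ₗ[ℚ] F) (H : Subgroup D.W) (Lam : D.W → D.V) (w : D.W) :
    D.W → List D.W → F
  | _, [] => 1
  | t, x :: rest =>
      algebraMap ℚ F (D.coroot (D.edgeRoot H x t) (Lam x)) *
        (emb (D.act x (Lam x) - D.act w (Lam x)))⁻¹ *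
        chainTerm emb H Lam w x rest

/-- the Bruhat order on cosets: `aH ≤ bH` -/
def cosetLE (H : Subgroup D.W) (a b : D.W) : Prop :=
  ∃ x y, D.SameCoset H a x ∧ D.SameCoset H b y ∧ D.bruhatLE x y

/-- the (standard) parabolic subgroup generated by simple reflections in `J` -/
def parab (J : Set D.I) : Subgroup D.W := Subgroup.closure (D.s '' J)

/-- `X*(T)_P`: integral weights orthogonal to all coroots of `W_P`,
i.e. to `γ∨` for all positive roots `γ` in the span of the simple roots of `P` -/
def OrthWeightP (J : Set D.I) (lam : D.V) : Prop :=
  D.IsIntegral lam ∧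
    ∀ γ, D.IsPosRoot γ → γ ∈ Submodule.span ℚ (D.simple '' J) → D.coroot γ lam = 0

/-- an admissible function `Λ : [v,w]^P → X*(T)_P` -/
def Admissible (J : Set D.I) (v w : D.W) (Lam : D.W → D.V) : Prop :=
  (∀ x, D.IsMinRep (D.parab J) x → D.bruhatLE v x → D.bruhatLE x w →
      D.OrthWeightP J (Lam x)) ∧
  (∀ x, D.IsMinRep (D.parab J) x → D.bruhatLE v x → D.bruhatLE x w → x ≠ w →
      D.act x (Lam x) ≠ D.act w (Lam x))

/-- the subword of `l` with letters at the positions in `S`, in increasing order -/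
def subwordF (l : List D.I) (S : Finset (Fin l.length)) : List D.I :=
  ((List.finRange l.length).filter fun j => j ∈ S).map l.get

/-- `β_j = s_{i_1} ⋯ s_{i_{j-1}}(α_{i_j})` attached to a reduced word `l` -/
noncomputable def refRoot (l : List D.I) (j : Fin l.length) : D.V :=
  D.act (D.wordProd (l.take j.val)) (D.simple (l.get j))

/-- the Weyl group is simply laced: the Cartan pairing is symmetric -/
def SimplyLaced : Prop :=
  ∀ i j, D.coroot (D.simple i) (D.simple j) = D.coroot (D.simple j) (D.simple i)

/-- generating relation of the heap order of the word `l`: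
`p_j < p_k` whenever `j < k` and `s_{i_j}`, `s_{i_k}` do not commute -/
def heapCovers (l : List D.I) (j k : Fin l.length) : Prop :=
  (j : ℕ) < (k : ℕ) ∧ D.s (l.get j) * D.s (l.get k) ≠ D.s (l.get k) * D.s (l.get j)

/-- the heap order of the word `l`: the minimal partial order generated by
`heapCovers` -/
def heapLE (l : List D.I) : Fin l.length → Fin l.length → Prop :=
  Relation.ReflTransGen (D.heapCovers l)

/-- strict heap order -/
def heapLT (l : List D.I) (j k : Fin l.length) : Prop := D.heapLE l j k ∧ j ≠ k

/-- `F` is an order filter of the heap `H(w)` of the word `l` -/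
def IsHeapFilter (l : List D.I) (F : Finset (Fin l.length)) : Prop :=
  ∀ j k, j ∈ F → D.heapLE l j k → k ∈ F

/-- `i` and `j` are joined by an edge of the Dynkin diagram -/
def adjDynkin (i j : D.I) : Prop := i ≠ j ∧ D.s i * D.s j ≠ D.s j * D.s i

/-- an elementary excitation `A ▷ B` of subsets of the heap of the word `l` -/
def Excite (l : List D.I) (A B : Finset (Fin l.length)) : Prop :=
  ∃ p q, D.heapLT l p q ∧ l.get p = l.get q ∧ q ∈ A ∧ p ∈ B ∧
    A.erase q = B.erase p ∧
    (∀ z, D.heapLT l p z → D.heapLT l z q → l.get z ≠ l.get p) ∧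
    ∀ u ∈ A, D.heapLE l p u → D.heapLE l u q → ¬ D.adjDynkin (l.get p) (l.get u)

/-- `A` is an excited diagram of `F` in the heap of the word `l`,
i.e. `A ∈ E_{H(w)}(F)` -/
def InExcited (l : List D.I) (F A : Finset (Fin l.length)) : Prop :=
  Relation.ReflTransGen (D.Excite l) F A

end WeylSetting

/-!
A `π`-minuscule element `x` is reached from `1` by steps `m ↦ s_i m` with `⟨m π, α_i∨⟩ = 1`, each
subtracting `α_i` from the weight. So `ℓ(x)` is the height of `π - x π`, and `x π` is pre-dominant
(`⟨x π, β∨⟩ ≥ -1` for `β > 0`). If a minuscule weight `λ` has `⟨λ, δ∨⟩ = -1`, then `λ + δ` is again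
minuscule; walking down a Bruhat chain from `w`, this makes every minimal coset representative
below `w` minuscule, and such representatives are determined by their weights.

Along an edge the endpoint weights differ by a multiple of a root; comparing lengths through
heights fixes the sign of the multiple, and pre-dominance with integrality forces it to be `±1`,
giving the multiplicity `⟨π, γ∨⟩ = 1` and the edge weight `β`.

The facts needed about coroots (positive coroots pair nonnegatively with dominant weights,
proportional roots have inversely proportional coroots) come from a `W`-invariant positive
definite form on the root span, averaged over the finite image of `W`.
-/
theorem Representation.exists_posDef_invariant_form {𝕜 G ι M : Type*} [Field 𝕜] [LinearOrder 𝕜]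
    [IsStrictOrderedRing 𝕜] [Group G] [Fintype ι] [AddCommGroup M] [Module 𝕜 M]
    (ρ : Representation 𝕜 G M) (hρ : (Set.range ρ).Finite) (b : Module.Basis ι 𝕜 M) :
    ∃ B : LinearMap.BilinForm 𝕜 M, (∀ u v, B u v = B v u) ∧ (∀ u, u ≠ 0 → 0 < B u u) ∧
      ∀ g u v, B (ρ g u) (ρ g v) = B u v := by
  let Q : LinearMap.BilinForm 𝕜 M := ∑ i, (b.coord i).smulRight (b.coord i)
  have hQ : ∀ u v, Q u v = ∑ i, b.repr u i * b.repr v i := fun u v => by simp [Q]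
  refine ⟨∑ T ∈ hρ.toFinset, Q.compl₁₂ T T, fun u v => ?_, fun u hu => ?_, fun g u v => ?_⟩
  · simp [hQ, mul_comm]
  · have hQpos : ∀ u, 0 ≤ Q u u := fun u => by
      rw [hQ]; exact Finset.sum_nonneg fun i _ => mul_self_nonneg _
    obtain ⟨i, hi⟩ : ∃ i, b.repr u i ≠ 0 := by
      by_contra! h; exact hu (b.ext_elem fun i => by simp [h])
    have h1 : (1 : Module.End 𝕜 M) ∈ hρ.toFinset := by simpa using ⟨1, map_one ρ⟩
    calc 0 < Q u u := by
          rw [hQ]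
          exact Finset.sum_pos' (fun j _ => mul_self_nonneg _)
            ⟨i, Finset.mem_univ _, mul_self_pos.mpr hi⟩
      _ ≤ ∑ T ∈ hρ.toFinset, Q (T u) (T u) :=
          Finset.single_le_sum (f := fun T => Q (T u) (T u)) (fun T _ => hQpos _) h1
      _ = _ := by simp
  · simp only [LinearMap.BilinForm.sum_apply, LinearMap.compl₁₂_apply]
    have hmul : ∀ T ∈ hρ.toFinset, ∀ h : G, T * ρ h ∈ hρ.toFinset := by
      simp only [Set.Finite.mem_toFinset, Set.mem_range]
      rintro _ ⟨k, rfl⟩ h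
      exact ⟨k * h, map_mul ρ k h⟩
    refine Finset.sum_nbij' (· * ρ g) (· * ρ g⁻¹) (fun T hT => hmul T hT g)
      (fun T hT => hmul T hT g⁻¹) (fun T _ => ?_) (fun T _ => ?_) (fun T _ => rfl)
    all_goals simp only [mul_assoc, ← map_mul, mul_inv_cancel, inv_mul_cancel, map_one, mul_one]

namespace WeylSetting

variable {D : WeylSetting} {pi : D.V}

lemma act_mul (g h : D.W) (v : D.V) : D.act (g * h) v = D.act g (D.act h v) := by
  rw [map_mul]; rfl

lemma act_one (v : D.V) : D.act 1 v = v := by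
  rw [map_one]; rfl

lemma act_inv_act (g : D.W) (v : D.V) : D.act g⁻¹ (D.act g v) = v := by
  rw [← act_mul, inv_mul_cancel, act_one]

lemma act_act_inv (g : D.W) (v : D.V) : D.act g (D.act g⁻¹ v) = v := by
  rw [← act_mul, mul_inv_cancel, act_one]

lemma eq_of_forall_act_eq {a b : D.W} (h : ∀ v, D.act a v = D.act b v) : a = b := by
  have := D.act_faithful (b⁻¹ * a) fun v => by rw [act_mul, h, act_inv_act]
  rwa [inv_mul_eq_one, eq_comm] at this

lemma coroot_act_root (g : D.W) {β : D.V} (hβ : β ∈ D.roots) (v : D.V) :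
    D.coroot (D.act g β) v = D.coroot β (D.act g⁻¹ v) := by
  rw [← D.coroot_equivariant g β hβ, act_act_inv]

lemma coroot_act_weight (g : D.W) {β : D.V} (hβ : β ∈ D.roots) (v : D.V) :
    D.coroot β (D.act g v) = D.coroot (D.act g⁻¹ β) v := by
  rw [coroot_act_root _ hβ, inv_inv]

lemma act_srefl_self {β : D.V} (hβ : β ∈ D.roots) : D.act (D.srefl β) β = -β := by
  rw [D.srefl_apply β hβ, D.coroot_self β hβ]
  module

lemma srefl_mul_self {β : D.V} (hβ : β ∈ D.roots) : D.srefl β * D.srefl β = 1 := by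
  refine eq_of_forall_act_eq fun v => ?_
  simp only [act_mul, D.srefl_apply β hβ, act_one, map_sub, map_smul, D.coroot_self β hβ,
    smul_eq_mul]
  module

lemma srefl_inv {β : D.V} (hβ : β ∈ D.roots) : (D.srefl β)⁻¹ = D.srefl β :=
  inv_eq_of_mul_eq_one_right (srefl_mul_self hβ)

lemma coroot_neg {β : D.V} (hβ : β ∈ D.roots) (v : D.V) :
    D.coroot (-β) v = -D.coroot β v := by
  rw [← act_srefl_self hβ, coroot_act_root _ hβ, srefl_inv hβ, D.srefl_apply β hβ, map_sub,
    map_smul, D.coroot_self β hβ, smul_eq_mul]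
  ring

lemma mul_srefl_mul_inv (g : D.W) {β : D.V} (hβ : β ∈ D.roots) :
    g * D.srefl β * g⁻¹ = D.srefl (D.act g β) := by
  refine eq_of_forall_act_eq fun v => ?_
  rw [D.srefl_apply _ (D.roots_invariant g β hβ), act_mul, act_mul, D.srefl_apply β hβ, map_sub,
    map_smul, coroot_act_root g hβ, act_act_inv]

lemma act_s (i : D.I) (v : D.V) :
    D.act (D.s i) v = v - D.coroot (D.simple i) v • D.simple i :=
  D.srefl_apply _ (D.simple_mem i) v

lemma s_mul_self (i : D.I) : D.s i * D.s i = 1 := srefl_mul_self (D.simple_mem i)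

lemma s_inv (i : D.I) : (D.s i)⁻¹ = D.s i := srefl_inv (D.simple_mem i)

lemma s_mul_s_mul (i : D.I) (g : D.W) : D.s i * (D.s i * g) = g := by
  rw [← mul_assoc, s_mul_self, one_mul]

lemma wordProd_cons (i : D.I) (l : List D.I) :
    D.wordProd (i :: l) = D.s i * D.wordProd l := by
  simp [wordProd]

lemma length_le_of_wordProd_eq {l : List D.I} {g : D.W} (h : D.wordProd l = g) :
    D.length g ≤ l.length :=
  Nat.sInf_le ⟨l, rfl, h⟩

lemma exists_isReduced (g : D.W) : ∃ l : List D.I, D.IsReduced l g := by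
  obtain ⟨l, hl⟩ := D.generated g
  obtain ⟨l', hl', hp⟩ := Nat.sInf_mem (⟨l.length, l, rfl, hl.symm⟩ :
    {n | ∃ l : List D.I, l.length = n ∧ D.wordProd l = g}.Nonempty)
  exact ⟨l', hp, hl'⟩

lemma length_one : D.length (1 : D.W) = 0 :=
  Nat.le_zero.mp (length_le_of_wordProd_eq (l := []) rfl)

lemma eq_one_of_length_eq_zero {g : D.W} (h : D.length g = 0) : g = 1 := by
  obtain ⟨l, hp, hl⟩ := exists_isReduced g
  rw [h, List.length_eq_zero_iff] at hl
  rw [← hp, hl]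
  rfl

lemma length_s_mul_le (i : D.I) (g : D.W) : D.length (D.s i * g) ≤ D.length g + 1 := by
  obtain ⟨l, hp, hl⟩ := exists_isReduced g
  simpa [hl] using length_le_of_wordProd_eq (l := i :: l) (by rw [wordProd_cons, hp])

lemma IsReduced.tail {i : D.I} {l : List D.I} {g : D.W} (h : D.IsReduced (i :: l) g) :
    D.IsReduced l (D.wordProd l) := by
  refine ⟨rfl, le_antisymm ?_ (length_le_of_wordProd_eq rfl)⟩
  have := length_s_mul_le i (D.wordProd l)
  rw [← wordProd_cons, h.1, ← h.2, List.length_cons] at this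
  omega

lemma root_ne_zero {β : D.V} (hβ : β ∈ D.roots) : β ≠ 0 := by
  intro h
  have := D.coroot_self β hβ
  rw [h, map_zero] at this
  norm_num at this

lemma sum_smul_simple_injective :
    Function.Injective fun c : D.I → ℚ => ∑ i, c i • D.simple i := by
  intro c d h
  have := Fintype.linearIndependent_iff.mp D.simple_indep (c - d)
    (by simpa [sub_smul, Finset.sum_sub_distrib, sub_eq_zero] using h)
  exact funext fun i => sub_eq_zero.mp (this i)

lemma isPosRoot_or_isPosRoot_neg {β : D.V} (hβ : β ∈ D.roots) :
    D.IsPosRoot β ∨ D.IsPosRoot (-β) :=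
  (D.root_pos_or_neg β hβ).imp (⟨hβ, ·⟩) (⟨D.roots_neg β hβ, ·⟩)

lemma IsPosRoot.eq_sum {β : D.V} (h : D.IsPosRoot β) :
    β = ∑ j, (D.posCoeff β j : ℚ) • D.simple j :=
  D.posCoeff_spec β h.1 h.2

lemma IsPosRoot.not_neg {β : D.V} (h : D.IsPosRoot β) : ¬ D.IsPosRoot (-β) := by
  rintro ⟨-, d, hd, hds⟩
  obtain ⟨hβ, c, hc, hcs⟩ := h
  have hcd : c + d = 0 := sum_smul_simple_injective (by
    simp only [Pi.add_apply, add_smul, Finset.sum_add_distrib, ← hcs, ← hds, zero_smul,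
      Pi.zero_apply, add_neg_cancel, Finset.sum_const_zero])
  apply root_ne_zero hβ
  rw [hcs]
  refine Finset.sum_eq_zero fun i _ => ?_
  have := congrFun hcd i
  simp only [Pi.add_apply, Pi.zero_apply] at this
  rw [show c i = 0 by linarith [hc i, hd i], zero_smul]

lemma isPosRoot_simple (i : D.I) : D.IsPosRoot (D.simple i) :=
  ⟨D.simple_mem i, Pi.single i 1, fun j => by by_cases hj : j = i <;> simp [hj],
    by simp [Pi.single_apply]⟩

lemma IsPosRoot.act_s_isPosRoot_or {β : D.V} (hβ : D.IsPosRoot β) (i : D.I) :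
    D.IsPosRoot (D.act (D.s i) β) ∨ ∃ n : ℕ, 0 < n ∧ β = (n : ℚ) • D.simple i := by
  refine or_iff_not_imp_left.mpr fun hneg => ?_
  obtain ⟨-, e, he, hes⟩ :=
    (isPosRoot_or_isPosRoot_neg (D.roots_invariant _ β hβ.1)).resolve_left hneg
  have hen : (fun j => e j + (D.posCoeff β j : ℚ)) = Pi.single i (D.coroot (D.simple i) β) := by
    apply sum_smul_simple_injective
    simp only [add_smul, Finset.sum_add_distrib, ← hes, ← hβ.eq_sum, act_s, Pi.single_apply,
      ite_smul, zero_smul, Finset.sum_ite_eq', Finset.mem_univ, if_true]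
    abel
  have hn : ∀ j, j ≠ i → D.posCoeff β j = 0 := fun j hj => by
    have := congrFun hen j
    simp only [Pi.single_eq_of_ne hj] at this
    exact (Nat.cast_nonpos (α := ℚ)).mp (by linarith [he j])
  have hβi : β = (D.posCoeff β i : ℚ) • D.simple i := by
    refine hβ.eq_sum.trans (Finset.sum_eq_single i (fun j _ hj => ?_) (by simp))
    rw [hn j hj, Nat.cast_zero, zero_smul]
  refine ⟨D.posCoeff β i, Nat.pos_of_ne_zero fun h0 => root_ne_zero hβ.1 ?_, hβi⟩
  rw [hβi, h0, Nat.cast_zero, zero_smul]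

variable (D) in
noncomputable def rootSpan : Submodule ℚ D.V := Submodule.span ℚ (Set.range D.simple)

variable (D) in
noncomputable def rootSpanBasis : Module.Basis D.I ℚ D.rootSpan :=
  Module.Basis.span D.simple_indep

lemma coe_rootSpanBasis (i : D.I) : (D.rootSpanBasis i : D.V) = D.simple i :=
  congrArg Subtype.val (Module.Basis.span_apply D.simple_indep i)

lemma simple_mem_rootSpan (i : D.I) : D.simple i ∈ D.rootSpan :=
  Submodule.subset_span ⟨i, rfl⟩

lemma IsPosRoot.mem_rootSpan {β : D.V} (h : D.IsPosRoot β) : β ∈ D.rootSpan := by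
  rw [h.eq_sum]
  exact Submodule.sum_mem _ fun j _ => Submodule.smul_mem _ _ (simple_mem_rootSpan j)

lemma root_mem_rootSpan {β : D.V} (hβ : β ∈ D.roots) : β ∈ D.rootSpan := by
  rcases isPosRoot_or_isPosRoot_neg hβ with h | h
  · exact h.mem_rootSpan
  · simpa using D.rootSpan.neg_mem h.mem_rootSpan

lemma act_mem_rootSpan (g : D.W) {v : D.V} (hv : v ∈ D.rootSpan) : D.act g v ∈ D.rootSpan := by
  have : D.rootSpan ≤ D.rootSpan.comap (D.act g).toLinearMap := Submodule.span_le.mpr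
    (by rintro _ ⟨i, rfl⟩; exact root_mem_rootSpan (D.roots_invariant g _ (D.simple_mem i)))
  exact this hv

variable (D) in
lemma exists_height : ∃ h : D.V →ₗ[ℚ] ℚ, ∀ i, h (D.simple i) = 1 := by
  obtain ⟨h, hh⟩ := LinearMap.exists_extend (D.rootSpanBasis.constr ℚ fun _ => (1 : ℚ))
  refine ⟨h, fun i => ?_⟩
  have := LinearMap.congr_fun hh (D.rootSpanBasis i)
  rwa [LinearMap.comp_apply, Submodule.subtype_apply, coe_rootSpanBasis,
    Module.Basis.constr_basis] at this

noncomputable def height (D : WeylSetting) : D.V →ₗ[ℚ] ℚ := D.exists_height.choose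

lemma height_simple (i : D.I) : D.height (D.simple i) = 1 := D.exists_height.choose_spec i

lemma IsPosRoot.one_le_height {β : D.V} (h : D.IsPosRoot β) : 1 ≤ D.height β := by
  have hsum : D.height β = ((∑ j, D.posCoeff β j : ℕ) : ℚ) := by
    conv_lhs => rw [h.eq_sum]
    simp [height_simple]
  rw [hsum, Nat.one_le_cast, Nat.one_le_iff_ne_zero]
  intro h0
  apply root_ne_zero h.1
  rw [h.eq_sum]
  refine Finset.sum_eq_zero fun j _ => ?_
  rw [Finset.sum_eq_zero_iff.mp h0 j (Finset.mem_univ j), Nat.cast_zero, zero_smul]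

variable (D) in
noncomputable def rootSpanRep : Representation ℚ D.W D.rootSpan where
  toFun g := (D.act g).toLinearMap.restrict fun _ => act_mem_rootSpan g
  map_one' := by ext; simp
  map_mul' g h := by ext; simp

lemma coe_rootSpanRep_apply (g : D.W) (u : D.rootSpan) :
    (D.rootSpanRep g u : D.V) = D.act g u := rfl

lemma finite_range_rootSpanRep : (Set.range D.rootSpanRep).Finite := by
  let f : Module.End ℚ D.rootSpan → D.I → D.V := fun T i => T (D.rootSpanBasis i)
  have hf : Function.Injective f := fun T T' h =>
    D.rootSpanBasis.ext fun i => Subtype.ext (congrFun h i)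
  refine Set.Finite.of_finite_image ((Set.Finite.pi fun _ => D.roots.finite_toSet).subset ?_)
    hf.injOn
  rintro _ ⟨_, ⟨g, rfl⟩, rfl⟩ i -
  simpa [f, coe_rootSpanRep_apply, coe_rootSpanBasis] using
    D.roots_invariant g _ (D.simple_mem i)

def toRootSpan {β : D.V} (hβ : β ∈ D.roots) : D.rootSpan := ⟨β, root_mem_rootSpan hβ⟩

variable (D) in
theorem exists_rootForm : ∃ B : LinearMap.BilinForm ℚ D.rootSpan,
    (∀ u v, B u v = B v u) ∧ (∀ u, u ≠ 0 → 0 < B u u) ∧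
    ∀ β (hβ : β ∈ D.roots) (u : D.rootSpan),
      D.coroot β u * B (toRootSpan hβ) (toRootSpan hβ) = 2 * B u (toRootSpan hβ) := by
  obtain ⟨B, hsymm, hpos, hinv⟩ := D.rootSpanRep.exists_posDef_invariant_form
    finite_range_rootSpanRep D.rootSpanBasis
  refine ⟨B, hsymm, hpos, fun β hβ u => ?_⟩
  have hs : ∀ x, D.rootSpanRep (D.srefl β) x = x - D.coroot β x • toRootSpan hβ := fun x =>
    Subtype.ext (D.srefl_apply β hβ x)
  have := hinv (D.srefl β) u (toRootSpan hβ)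
  rw [hs, hs, show D.coroot β (toRootSpan hβ : D.V) = 2 from D.coroot_self β hβ] at this
  simp only [map_sub, map_smul, LinearMap.sub_apply, LinearMap.smul_apply, smul_eq_mul] at this
  linarith

variable (D) in
noncomputable def rootForm : LinearMap.BilinForm ℚ D.rootSpan := D.exists_rootForm.choose

lemma rootForm_comm (u v : D.rootSpan) : D.rootForm u v = D.rootForm v u :=
  D.exists_rootForm.choose_spec.1 u v

lemma rootForm_self_pos {u : D.rootSpan} (hu : u ≠ 0) : 0 < D.rootForm u u :=
  D.exists_rootForm.choose_spec.2.1 u hu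

lemma rootForm_root_pos {β : D.V} (hβ : β ∈ D.roots) :
    0 < D.rootForm (toRootSpan hβ) (toRootSpan hβ) :=
  rootForm_self_pos fun h => root_ne_zero hβ (congrArg Subtype.val h)

lemma coroot_apply_rootSpan {β : D.V} (hβ : β ∈ D.roots) (u : D.rootSpan) :
    D.coroot β u =
      2 * D.rootForm u (toRootSpan hβ) / D.rootForm (toRootSpan hβ) (toRootSpan hβ) := by
  rw [eq_div_iff (rootForm_root_pos hβ).ne']
  exact D.exists_rootForm.choose_spec.2.2 β hβ u

lemma toRootSpan_simple (i : D.I) : toRootSpan (D.simple_mem i) = D.rootSpanBasis i :=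
  Subtype.ext (coe_rootSpanBasis i).symm

lemma rootForm_basis_pos (j : D.I) : 0 < D.rootForm (D.rootSpanBasis j) (D.rootSpanBasis j) := by
  simpa [toRootSpan_simple] using rootForm_root_pos (D.simple_mem j)

lemma coroot_simple_apply_rootSpan (j : D.I) (u : D.rootSpan) :
    D.coroot (D.simple j) u = 2 * D.rootForm u (D.rootSpanBasis j) /
      D.rootForm (D.rootSpanBasis j) (D.rootSpanBasis j) := by
  rw [coroot_apply_rootSpan (D.simple_mem j), toRootSpan_simple]

lemma IsPosRoot.toRootSpan_eq_sum {β : D.V} (h : D.IsPosRoot β) :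
    toRootSpan h.1 = ∑ j, (D.posCoeff β j : ℚ) • D.rootSpanBasis j :=
  Subtype.ext (h.eq_sum.trans (by simp [coe_rootSpanBasis]))

variable (D) in
noncomputable def corootSpan : Submodule ℚ (D.V →ₗ[ℚ] ℚ) :=
  Submodule.span ℚ (Set.range fun i => D.coroot (D.simple i))

lemma act_eq_self_of_coroot_simple_eq_zero {v : D.V} (hv : ∀ i, D.coroot (D.simple i) v = 0)
    (g : D.W) : D.act g v = v := by
  obtain ⟨l, rfl⟩ := D.generated g
  induction l with
  | nil => exact act_one v
  | cons i l ih =>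
    rw [List.map_cons, List.prod_cons, act_mul, ih, D.srefl_apply _ (D.simple_mem i), hv,
      zero_smul, sub_zero]

lemma coroot_mem_corootSpan {β : D.V} (hβ : β ∈ D.roots) : D.coroot β ∈ D.corootSpan := by
  refine mem_span_of_iInf_ker_le_ker fun v hv => ?_
  simp only [Submodule.mem_iInf, LinearMap.mem_ker] at hv
  have := act_eq_self_of_coroot_simple_eq_zero hv (D.srefl β)
  rw [D.srefl_apply β hβ, sub_eq_self, smul_eq_zero] at this
  exact LinearMap.mem_ker.mpr (this.resolve_right (root_ne_zero hβ))

lemma eq_of_mem_corootSpan {μ ν : D.V →ₗ[ℚ] ℚ} (hμ : μ ∈ D.corootSpan) (hν : ν ∈ D.corootSpan)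
    (h : ∀ i, μ (D.simple i) = ν (D.simple i)) : μ = ν := by
  obtain ⟨e, he⟩ := (Submodule.mem_span_range_iff_exists_fun ℚ).mp (D.corootSpan.sub_mem hμ hν)
  let x : D.rootSpan :=
    ∑ j, (e j / D.rootForm (D.rootSpanBasis j) (D.rootSpanBasis j)) • D.rootSpanBasis j
  -- `x` represents `μ - ν` through the form; as `μ - ν` vanishes on the root span, `B(x, x) = 0`.
  have hx : ∀ u, 2 * D.rootForm u x = (μ - ν) u := fun u => by
    rw [← he]
    simp only [x, map_sum, map_smul, smul_eq_mul, Finset.mul_sum, LinearMap.sum_apply,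
      LinearMap.smul_apply]
    refine Finset.sum_congr rfl fun j _ => ?_
    rw [coroot_simple_apply_rootSpan]
    field_simp [(rootForm_basis_pos j).ne']
  have hvan : (μ - ν).comp D.rootSpan.subtype = 0 :=
    D.rootSpanBasis.ext fun i => by simp [coe_rootSpanBasis, h]
  have hx0 : x = 0 := by
    by_contra hne
    have := hx x
    rw [show (μ - ν) x = 0 from LinearMap.congr_fun hvan x] at this
    linarith [rootForm_self_pos hne]
  have he0 : ∀ j, e j = 0 := fun j => by
    have := Fintype.linearIndependent_iff.mp D.rootSpanBasis.linearIndependent _ hx0 j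
    simpa [(rootForm_basis_pos j).ne'] using this
  rw [← sub_eq_zero, ← he]
  simp [he0]

lemma IsPosRoot.exists_coroot_eq_sum {β : D.V} (h : D.IsPosRoot β) :
    ∃ c : D.I → ℚ, (∀ j, 0 ≤ c j) ∧ D.coroot β = ∑ j, c j • D.coroot (D.simple j) := by
  have hβ := rootForm_root_pos h.1
  refine ⟨fun j => D.posCoeff β j * D.rootForm (D.rootSpanBasis j) (D.rootSpanBasis j) /
    D.rootForm (toRootSpan h.1) (toRootSpan h.1),
    fun j => by have := rootForm_basis_pos j; positivity, ?_⟩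
  refine eq_of_mem_corootSpan (coroot_mem_corootSpan h.1)
    (Submodule.sum_mem _ fun j _ => Submodule.smul_mem _ _ (Submodule.subset_span ⟨j, rfl⟩))
    fun k => ?_
  have hk : D.rootForm (D.rootSpanBasis k) (toRootSpan h.1) =
      ∑ j, D.posCoeff β j * D.rootForm (D.rootSpanBasis k) (D.rootSpanBasis j) := by
    simp [h.toRootSpan_eq_sum]
  rw [← coe_rootSpanBasis k, coroot_apply_rootSpan h.1, hk]
  simp only [LinearMap.sum_apply, LinearMap.smul_apply, smul_eq_mul, Finset.mul_sum,
    Finset.sum_div]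
  refine Finset.sum_congr rfl fun j _ => ?_
  rw [coroot_simple_apply_rootSpan]
  field_simp [(rootForm_basis_pos j).ne']

lemma IsDominant.coroot_nonneg (hpi : D.IsDominant pi) {β : D.V}
    (h : D.IsPosRoot β) : 0 ≤ D.coroot β pi := by
  obtain ⟨c, hc, hβ⟩ := h.exists_coroot_eq_sum
  rw [hβ, LinearMap.sum_apply]
  exact Finset.sum_nonneg fun j _ => mul_nonneg (hc j) (hpi.2 j)

lemma coroot_eq_inv_smul_of_eq_smul {γ δ : D.V} (hγ : γ ∈ D.roots) (hδ : δ ∈ D.roots) {q : ℚ}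
    (hq : q ≠ 0) (h : δ = q • γ) : D.coroot δ = q⁻¹ • D.coroot γ := by
  refine eq_of_mem_corootSpan (coroot_mem_corootSpan hδ)
    (Submodule.smul_mem _ _ (coroot_mem_corootSpan hγ)) fun k => ?_
  have hδγ : toRootSpan hδ = q • toRootSpan hγ := Subtype.ext h
  have := (rootForm_root_pos hγ).ne'
  rw [← coe_rootSpanBasis k, LinearMap.smul_apply, coroot_apply_rootSpan hδ,
    coroot_apply_rootSpan hγ, hδγ]
  simp only [map_smul, smul_eq_mul, LinearMap.smul_apply]
  field_simp

lemma coroot_lt_zero_comm {β γ : D.V} (hβ : β ∈ D.roots) (hγ : γ ∈ D.roots) :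
    D.coroot β γ < 0 ↔ D.coroot γ β < 0 := by
  have h1 : D.coroot β γ = _ := coroot_apply_rootSpan hβ (toRootSpan hγ)
  have h2 : D.coroot γ β = _ := coroot_apply_rootSpan hγ (toRootSpan hβ)
  rw [h1, h2, div_lt_iff₀ (rootForm_root_pos hβ), div_lt_iff₀ (rootForm_root_pos hγ), zero_mul,
    zero_mul, rootForm_comm]

lemma srefl_eq_s_of_eq_smul {β : D.V} (hβ : β ∈ D.roots) {i : D.I} {q : ℚ} (hq : q ≠ 0)
    (h : β = q • D.simple i) : D.srefl β = D.s i := by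
  refine eq_of_forall_act_eq fun v => ?_
  rw [D.srefl_apply β hβ, act_s, coroot_eq_inv_smul_of_eq_smul (D.simple_mem i) hβ hq h,
    LinearMap.smul_apply, h, smul_smul, smul_eq_mul, mul_comm, ← mul_assoc, mul_inv_cancel₀ hq,
    one_mul]

lemma exists_srefl_mul_wordProd_eq_eraseIdx {l : List D.I} {β : D.V} (hβ : D.IsPosRoot β)
    (hneg : ¬ D.IsPosRoot (D.act (D.wordProd l)⁻¹ β)) :
    ∃ k < l.length, D.srefl β * D.wordProd l = D.wordProd (l.eraseIdx k) := by
  induction l generalizing β with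
  | nil => exact absurd (by simpa [wordProd, act_one] using hβ) hneg
  | cons i l ih =>
    rcases hβ.act_s_isPosRoot_or i with hpos | ⟨n, hn, hβn⟩
    · obtain ⟨k, hk, hke⟩ := ih hpos (by
        rwa [wordProd_cons, mul_inv_rev, act_mul, s_inv] at hneg)
      refine ⟨k + 1, by simpa using hk, ?_⟩
      have hconj : D.srefl β = D.s i * D.srefl (D.act (D.s i) β) * D.s i := by
        rw [← mul_srefl_mul_inv _ hβ.1, s_inv, ← mul_assoc, ← mul_assoc, s_mul_self, one_mul,
          mul_assoc, s_mul_self, mul_one]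
      rw [wordProd_cons, hconj, mul_assoc, mul_assoc, s_mul_s_mul, hke, List.eraseIdx_cons_succ,
        wordProd_cons]
    · refine ⟨0, by simp, ?_⟩
      rw [srefl_eq_s_of_eq_smul hβ.1 (by positivity) hβn, wordProd_cons, s_mul_s_mul]
      rfl

lemma length_srefl_mul_lt {β : D.V} {g : D.W} (hβ : D.IsPosRoot β)
    (hneg : ¬ D.IsPosRoot (D.act g⁻¹ β)) : D.length (D.srefl β * g) < D.length g := by
  obtain ⟨l, rfl, hl⟩ := exists_isReduced g
  obtain ⟨k, hk, hke⟩ := exists_srefl_mul_wordProd_eq_eraseIdx hβ hneg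
  have := length_le_of_wordProd_eq hke.symm
  have := List.length_eraseIdx_add_one hk
  omega

lemma length_lt_srefl_mul {β : D.V} {g : D.W} (hβ : D.IsPosRoot β)
    (hpos : D.IsPosRoot (D.act g⁻¹ β)) : D.length g < D.length (D.srefl β * g) := by
  have hneg : ¬ D.IsPosRoot (D.act (D.srefl β * g)⁻¹ β) := by
    rw [mul_inv_rev, act_mul, srefl_inv hβ.1, act_srefl_self hβ.1, map_neg]
    exact hpos.not_neg
  simpa [← mul_assoc, srefl_mul_self hβ.1] using length_srefl_mul_lt hβ hneg

lemma length_s_mul_add_one {i : D.I} {g : D.W}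
    (hneg : ¬ D.IsPosRoot (D.act g⁻¹ (D.simple i))) : D.length (D.s i * g) + 1 = D.length g := by
  have : D.length (D.s i * g) < D.length g := length_srefl_mul_lt (isPosRoot_simple i) hneg
  have := length_s_mul_le i (D.s i * g)
  rw [s_mul_s_mul] at this
  omega

lemma length_s_mul {i : D.I} {g : D.W} (hpos : D.IsPosRoot (D.act g⁻¹ (D.simple i))) :
    D.length (D.s i * g) = D.length g + 1 := by
  have : D.length g < D.length (D.s i * g) := length_lt_srefl_mul (isPosRoot_simple i) hpos
  have := length_s_mul_le i g
  omega

lemma bruhatLE.length_le {a b : D.W} (h : D.bruhatLE a b) : D.length a ≤ D.length b := by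
  induction h with
  | refl => rfl
  | tail _ hbc ih => exact ih.trans hbc.2.le

lemma bruhatLT.length_lt {a b : D.W} (h : D.bruhatLT a b) : D.length a < D.length b := by
  rcases Relation.ReflTransGen.cases_head h.1 with heq | ⟨c, hac, hcb⟩
  · exact absurd heq h.2
  · exact hac.2.trans_le (bruhatLE.length_le hcb)

lemma coroot_simple_act_s (i : D.I) (v : D.V) :
    D.coroot (D.simple i) (D.act (D.s i) v) = -D.coroot (D.simple i) v := by
  rw [act_s, map_sub, map_smul, D.coroot_self _ (D.simple_mem i), smul_eq_mul]
  ring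

lemma IsDominant.isPosRoot_of_coroot_pos (hpi : D.IsDominant pi) {ε : D.V} (hε : ε ∈ D.roots)
    (h : 0 < D.coroot ε pi) : D.IsPosRoot ε := by
  refine (isPosRoot_or_isPosRoot_neg hε).resolve_right fun hneg => ?_
  have := hpi.coroot_nonneg hneg
  rw [coroot_neg hε] at this
  linarith

lemma isPosRoot_of_height_pos {ε : D.V} (hε : ε ∈ D.roots) (h : 0 < D.height ε) :
    D.IsPosRoot ε := by
  refine (isPosRoot_or_isPosRoot_neg hε).resolve_right fun hneg => ?_
  have := hneg.one_le_height
  rw [map_neg] at this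
  linarith

lemma IsIntegral.act {lam : D.V} (h : D.IsIntegral lam) (g : D.W) :
    D.IsIntegral (D.act g lam) := fun β hβ => by
  rw [coroot_act_weight g hβ.1]
  have hε := D.roots_invariant g⁻¹ β hβ.1
  rcases isPosRoot_or_isPosRoot_neg hε with hpos | hneg
  · exact h _ hpos
  · obtain ⟨n, hn⟩ := h _ hneg
    refine ⟨-n, ?_⟩
    rw [Int.cast_neg, ← hn, coroot_neg hε, neg_neg]

lemma IsPreDominant.coroot_eq_neg_one {lam : D.V} (h : D.IsPreDominant lam) {β : D.V}
    (hβ : D.IsPosRoot β) (hneg : D.coroot β lam < 0) : D.coroot β lam = -1 := by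
  obtain ⟨n, hn⟩ := h.1 β hβ
  have hle := h.2 β hβ
  rw [hn] at hneg hle ⊢
  have : n = -1 := by
    have : (-1 : ℤ) ≤ n := by exact_mod_cast hle
    have : n < 0 := by exact_mod_cast hneg
    omega
  simp [this]

variable (D) in
def IsMinusculeWord (pi : D.V) (l : List D.I) : Prop :=
  ∀ k : Fin l.length,
    D.coroot (D.simple (l.get k)) (D.act (D.wordProd (l.drop (k.val + 1))) pi) = 1

lemma isMinusculeWord_cons_iff {i : D.I} {l : List D.I} :
    D.IsMinusculeWord pi (i :: l) ↔
      D.coroot (D.simple i) (D.act (D.wordProd l) pi) = 1 ∧ D.IsMinusculeWord pi l := by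
  refine ⟨fun h => ⟨by simpa using h 0, fun k => by simpa using h k.succ⟩, fun ⟨h0, h⟩ k => ?_⟩
  induction k using Fin.cases with
  | zero => simpa using h0
  | succ k => simpa using h k

lemma isMinuscule_one : D.IsMinuscule pi 1 :=
  ⟨[], ⟨rfl, length_one.symm⟩, fun k => k.elim0⟩

lemma IsMinuscule.s_mul (hpi : D.IsDominant pi) {m : D.W} (hm : D.IsMinuscule pi m) {i : D.I}
    (h : D.coroot (D.simple i) (D.act m pi) = 1) : D.IsMinuscule pi (D.s i * m) := by
  obtain ⟨l, hl, hw⟩ := hm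
  have hpos : D.IsPosRoot (D.act m⁻¹ (D.simple i)) :=
    hpi.isPosRoot_of_coroot_pos (D.roots_invariant _ _ (D.simple_mem i))
      (by rw [← coroot_act_weight m (D.simple_mem i), h]; norm_num)
  refine ⟨i :: l, ⟨by rw [wordProd_cons, hl.1], ?_⟩,
    isMinusculeWord_cons_iff.mpr ⟨by rwa [hl.1], hw⟩⟩
  rw [length_s_mul hpos, ← hl.2, List.length_cons]

@[elab_as_elim]
theorem IsMinuscule.induction_on {P : D.W → Prop} {m : D.W} (hm : D.IsMinuscule pi m)
    (one : P 1)
    (s_mul : ∀ i m, D.IsMinuscule pi m → D.coroot (D.simple i) (D.act m pi) = 1 →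
      D.length (D.s i * m) = D.length m + 1 → P m → P (D.s i * m)) : P m := by
  obtain ⟨l, hl, hw⟩ := hm
  change D.IsMinusculeWord pi l at hw
  induction l generalizing m with
  | nil => rw [← hl.1]; exact one
  | cons i l ih =>
    rw [isMinusculeWord_cons_iff] at hw
    have htail := hl.tail
    rw [← hl.1, wordProd_cons]
    refine s_mul i _ ⟨l, htail, hw.2⟩ hw.1 ?_ (ih htail hw.2)
    rw [← wordProd_cons, hl.1, ← hl.2, ← htail.2, List.length_cons]

lemma IsMinuscule.eq_one_or {m : D.W} (hm : D.IsMinuscule pi m) :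
    m = 1 ∨ ∃ i u, D.IsMinuscule pi u ∧ D.coroot (D.simple i) (D.act u pi) = 1 ∧
      D.length m = D.length u + 1 ∧ m = D.s i * u :=
  hm.induction_on (Or.inl rfl) fun i u hu hui hlen _ => Or.inr ⟨i, u, hu, hui, hlen, rfl⟩

lemma IsMinuscule.height_sub_act {m : D.W} (hm : D.IsMinuscule pi m) :
    D.height (pi - D.act m pi) = D.length m := by
  refine hm.induction_on (by simp [length_one]) fun i u _ hui hlen ih => ?_
  rw [act_mul, act_s, hui, one_smul, hlen, sub_sub_eq_add_sub, add_sub_right_comm, map_add, ih,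
    height_simple, Nat.cast_succ]

lemma IsMinuscule.length_sub_length {m u : D.W} (hm : D.IsMinuscule pi m)
    (hu : D.IsMinuscule pi u) :
    (D.length m : ℚ) - D.length u = D.height (D.act u pi - D.act m pi) := by
  rw [← hm.height_sub_act, ← hu.height_sub_act, ← map_sub]
  congr 1
  abel

lemma IsMinuscule.length_lt_of_act_eq_add {m u : D.W} (hm : D.IsMinuscule pi m)
    (hu : D.IsMinuscule pi u) {ε : D.V} (hε : D.IsPosRoot ε) (h : D.act m pi = D.act u pi + ε) :
    D.length m < D.length u := by
  have := hm.length_sub_length hu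
  rw [h, sub_add_cancel_left, map_neg] at this
  have : (D.length m : ℚ) < D.length u := by linarith [hε.one_le_height]
  exact_mod_cast this

lemma IsMinuscule.isPreDominant (hpi : D.IsDominant pi) {m : D.W} (hm : D.IsMinuscule pi m) :
    D.IsPreDominant (D.act m pi) := by
  refine ⟨hpi.1.act m, hm.induction_on (fun β hβ => ?_) fun i u _ hui _ ih β hβ => ?_⟩
  · rw [act_one]
    linarith [hpi.coroot_nonneg hβ]
  · rw [act_mul, coroot_act_weight _ hβ.1, s_inv]
    rcases hβ.act_s_isPosRoot_or i with hpos | ⟨n, hn, hβn⟩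
    · exact ih _ hpos
    · rw [← s_inv, ← coroot_act_weight _ hβ.1, coroot_eq_inv_smul_of_eq_smul (D.simple_mem i) hβ.1
        (by positivity) hβn, LinearMap.smul_apply, coroot_simple_act_s, hui, smul_eq_mul]
      have : (1 : ℚ) ≤ n := by exact_mod_cast hn
      have : (n : ℚ)⁻¹ ≤ 1 := inv_le_one_of_one_le₀ this
      linarith

lemma IsMinuscule.exists_act_eq_add_smul_simple (hpi : D.IsDominant pi) {m : D.W}
    (hm : D.IsMinuscule pi m) {i : D.I} {z : ℤ} (hz : 0 ≤ z)
    (hmi : D.coroot (D.simple i) (D.act m pi) = 1 - z)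
    (hup : D.coroot (D.simple i) (D.act m pi) = -1 →
      ∃ m', D.IsMinuscule pi m' ∧ D.act m' pi = D.act m pi + D.simple i) :
    ∃ m', D.IsMinuscule pi m' ∧ D.act m' pi = D.act m pi + ((z : ℚ) - 1) • D.simple i := by
  have hz2 : z ≤ 2 := by
    have := (hm.isPreDominant hpi).2 _ (isPosRoot_simple i)
    rw [hmi] at this
    have : (z : ℚ) ≤ 2 := by linarith
    exact_mod_cast this
  obtain rfl | rfl | rfl : z = 0 ∨ z = 1 ∨ z = 2 := by omega
  · refine ⟨D.s i * m, hm.s_mul hpi (by simpa using hmi), ?_⟩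
    rw [act_mul, act_s, hmi]
    push_cast
    module
  · exact ⟨m, hm, by simp⟩
  · obtain ⟨m', hm', h⟩ := hup (by rw [hmi]; norm_num)
    exact ⟨m', hm', by rw [h]; push_cast; module⟩

lemma act_eq_act_s_mul_add_simple {i : D.I} {u : D.W}
    (hui : D.coroot (D.simple i) (D.act u pi) = 1) :
    D.act u pi = D.act (D.s i * u) pi + D.simple i := by
  rw [act_mul, act_s, hui, one_smul, sub_add_cancel]

lemma coroot_simple_nonneg_of_act_s_mul (hpi : D.IsDominant pi) {i : D.I} {u : D.W}
    (ht : D.IsMinuscule pi (D.s i * u)) (hui : D.coroot (D.simple i) (D.act u pi) = 1) {δ : D.V}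
    (hδ : D.IsPosRoot δ) (hpos : D.IsPosRoot (D.act (D.s i) δ))
    (hco : D.coroot δ (D.act (D.s i * u) pi) = -1) : 0 ≤ D.coroot (D.simple i) δ := by
  by_contra! hneg
  have h1 : D.coroot δ (D.simple i) < 0 := (coroot_lt_zero_comm (D.simple_mem i) hδ.1).mp hneg
  have h2 := (ht.isPreDominant hpi).2 _ hpos
  rw [coroot_act_root _ hδ.1, s_inv, ← act_mul, s_mul_s_mul, act_eq_act_s_mul_add_simple hui,
    map_add, hco] at h2
  linarith

theorem IsMinuscule.exists_act_eq_add (hpi : D.IsDominant pi) {t : D.W}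
    (ht : D.IsMinuscule pi t) {δ : D.V} (hδ : D.IsPosRoot δ)
    (hco : D.coroot δ (D.act t pi) = -1) :
    ∃ m, D.IsMinuscule pi m ∧ D.act m pi = D.act t pi + δ := by
  induction hN : D.length t using Nat.strong_induction_on generalizing t δ with
  | _ N ih =>
  rcases ht.eq_one_or with rfl | ⟨i, u, hu, hui, hlen, rfl⟩
  · rw [act_one] at hco
    linarith [hpi.coroot_nonneg hδ]
  have hut := act_eq_act_s_mul_add_simple hui
  -- If `s_i δ > 0`, raise `u` by `s_i δ` inductively; the result misses the target by
  -- `(z - 1) α_i` with `z = ⟨δ, α_i∨⟩`. Otherwise `δ = α_i`, and `u` itself has weight `t π + δ`.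
  rcases hδ.act_s_isPosRoot_or i with hpos | ⟨n, hn, hδn⟩
  · obtain ⟨z, hz⟩ := D.crystallographic _ (D.simple_mem i) δ hδ.1
    have hδ' : D.act (D.s i) δ = δ - (z : ℚ) • D.simple i := by rw [act_s, hz]
    have hco' : D.coroot (D.act (D.s i) δ) (D.act u pi) = -1 := by
      rw [coroot_act_root _ hδ.1, s_inv, ← act_mul, hco]
    obtain ⟨m', hm', hm'w⟩ := ih _ (by omega) hu hpos hco' rfl
    have hz0 : 0 ≤ z := by
      have := coroot_simple_nonneg_of_act_s_mul hpi ht hui hδ hpos hco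
      rw [hz] at this
      exact_mod_cast this
    have hm'i : D.coroot (D.simple i) (D.act m' pi) = 1 - z := by
      rw [hm'w, hδ', map_add, map_sub, map_smul, hui, hz, D.coroot_self _ (D.simple_mem i),
        smul_eq_mul]
      ring
    have hm'u := hm'.length_lt_of_act_eq_add hu hpos hm'w
    obtain ⟨m, hm, hmw⟩ := hm'.exists_act_eq_add_smul_simple hpi hz0 hm'i
      fun h => ih _ (by omega) hm' (isPosRoot_simple i) h rfl
    refine ⟨m, hm, ?_⟩
    rw [hmw, hm'w, hδ', hut]
    module
  · rw [coroot_eq_inv_smul_of_eq_smul (D.simple_mem i) hδ.1 (by positivity) hδn,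
      LinearMap.smul_apply, act_mul, coroot_simple_act_s, hui, smul_eq_mul] at hco
    have hn1 : (n : ℚ) = 1 := by
      have : (n : ℚ) ≠ 0 := by positivity
      field_simp at hco
      linarith
    exact ⟨u, hu, by rw [hut, hδn, hn1, one_smul]⟩

lemma act_eq_of_sameCoset {x y : D.W} (h : D.SameCoset (D.stab pi) x y) :
    D.act x pi = D.act y pi := by
  have h1 : D.act (x⁻¹ * y) pi = pi := h
  rw [act_mul] at h1
  calc D.act x pi = D.act x (D.act x⁻¹ (D.act y pi)) := by rw [h1]
    _ = D.act y pi := act_act_inv _ _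

lemma IsMinRep.eq_one_of_act_eq {x : D.W} (hx : D.IsMinRep (D.stab pi) x)
    (h : D.act x pi = pi) : x = 1 := by
  have hinv : D.act (x⁻¹ * 1) pi = pi := by
    conv_lhs => rw [mul_one, ← h]
    exact act_inv_act x pi
  exact eq_one_of_length_eq_zero (Nat.le_zero.mp (by simpa [length_one] using hx 1 hinv))

lemma IsMinRep.s_mul (hpi : D.IsDominant pi) {x : D.W} (hx : D.IsMinRep (D.stab pi) x) {i : D.I}
    (h : D.coroot (D.simple i) (D.act x pi) < 0) : D.IsMinRep (D.stab pi) (D.s i * x) := by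
  have hneg : ¬ D.IsPosRoot (D.act x⁻¹ (D.simple i)) := fun hpos => by
    have := hpi.coroot_nonneg hpos
    rw [← coroot_act_weight x (D.simple_mem i)] at this
    linarith
  have hlen := length_s_mul_add_one hneg
  intro g hg
  have := hx (D.s i * g) (by rwa [mul_inv_rev, s_inv, mul_assoc] at hg)
  have := length_s_mul_le i g
  omega

theorem IsMinRep.isMinuscule_of_act_eq (hpi : D.IsDominant pi) {x m : D.W}
    (hx : D.IsMinRep (D.stab pi) x) (hm : D.IsMinuscule pi m) (h : D.act x pi = D.act m pi) :
    D.IsMinuscule pi x := by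
  refine hm.induction_on (P := fun m => ∀ x, D.IsMinRep (D.stab pi) x →
      D.act x pi = D.act m pi → D.IsMinuscule pi x) (fun x hx h => ?_)
    (fun i u _ hui _ ih x hx h => ?_) x hx h
  · rw [act_one] at h
    rw [hx.eq_one_of_act_eq h]
    exact isMinuscule_one
  · have hsx := hx.s_mul hpi (i := i) (by rw [h, act_mul, coroot_simple_act_s, hui]; norm_num)
    have hw : D.act (D.s i * x) pi = D.act u pi := by rw [act_mul, h, ← act_mul, s_mul_s_mul]
    have := (ih _ hsx hw).s_mul hpi (i := i) (by rw [hw, hui])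
    rwa [s_mul_s_mul] at this

theorem IsMinRep.eq_of_act_eq (hpi : D.IsDominant pi) {x y : D.W} (hx : D.IsMinuscule pi x)
    (hxr : D.IsMinRep (D.stab pi) x) (hyr : D.IsMinRep (D.stab pi) y)
    (h : D.act x pi = D.act y pi) : x = y := by
  refine hx.induction_on (P := fun x => D.IsMinRep (D.stab pi) x → ∀ y,
      D.IsMinRep (D.stab pi) y → D.act x pi = D.act y pi → x = y) (fun _ y hyr h => ?_)
    (fun i u _ hui _ ih hxr y hyr h => ?_) hxr y hyr h
  · rw [act_one] at h
    exact (hyr.eq_one_of_act_eq h.symm).symm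
  · have hneg : D.coroot (D.simple i) (D.act (D.s i * u) pi) < 0 := by
      rw [act_mul, coroot_simple_act_s, hui]
      norm_num
    have hur : D.IsMinRep (D.stab pi) u := by simpa [s_mul_s_mul] using hxr.s_mul hpi hneg
    have hsy := hyr.s_mul hpi (i := i) (by rwa [← h])
    rw [ih hur _ hsy (by rw [act_mul, ← h, ← act_mul, s_mul_s_mul]), s_mul_s_mul]

theorem exists_isMinuscule_act_eq_of_bruhatLE (hpi : D.IsDominant pi) {w z : D.W}
    (hw : D.IsMinuscule pi w) (hz : D.bruhatLE z w) :
    ∃ m, D.IsMinuscule pi m ∧ D.act m pi = D.act z pi := by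
  induction hz using Relation.ReflTransGen.head_induction_on with
  | refl => exact ⟨w, hw, rfl⟩
  | @head a _ hac _ ih =>
    obtain ⟨m, hm, hmc⟩ := ih
    obtain ⟨⟨β, hβ, rfl⟩, hlen⟩ := hac
    have ha : D.act a pi = D.act m pi - D.coroot β (D.act m pi) • β := by
      rw [hmc, ← D.srefl_apply β hβ.1, ← act_mul, ← mul_assoc, srefl_mul_self hβ.1, one_mul]
    rcases lt_trichotomy (D.coroot β (D.act m pi)) 0 with hq | hq | hq
    · have hq1 := (hm.isPreDominant hpi).coroot_eq_neg_one hβ hq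
      obtain ⟨m', hm', hm'w⟩ := hm.exists_act_eq_add hpi hβ hq1
      exact ⟨m', hm', by rw [hm'w, ha, hq1]; module⟩
    · exact ⟨m, hm, by rw [ha, hq, zero_smul, sub_zero]⟩
    · have hpos : D.IsPosRoot (D.act (D.srefl β * a)⁻¹ β) :=
        hpi.isPosRoot_of_coroot_pos (D.roots_invariant _ _ hβ.1)
          (by rwa [← coroot_act_weight _ hβ.1, ← hmc])
      have := length_lt_srefl_mul hβ hpos
      rw [← mul_assoc, srefl_mul_self hβ.1, one_mul] at this
      omega

theorem IsMinRep.isMinuscule_of_bruhatLE (hpi : D.IsDominant pi) {w x : D.W}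
    (hw : D.IsMinuscule pi w) (hxw : D.bruhatLE x w) (hx : D.IsMinRep (D.stab pi) x) :
    D.IsMinuscule pi x :=
  let ⟨_, hm, h⟩ := exists_isMinuscule_act_eq_of_bruhatLE hpi hw hxw
  hx.isMinuscule_of_act_eq hpi hm h.symm

theorem coroot_eq_one_of_sameCoset_mul_srefl (hpi : D.IsDominant pi) {x y : D.W}
    (hx : D.IsMinuscule pi x) (hy : D.IsMinuscule pi y) (hxy : D.bruhatLT x y) {γ : D.V}
    (hγ : D.IsPosRoot γ) (hcos : D.SameCoset (D.stab pi) (x * D.srefl γ) y) :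
    D.coroot γ pi = 1 := by
  have hxγ := D.roots_invariant x γ hγ.1
  have hyx : D.act y pi = D.act x pi - D.coroot γ pi • D.act x γ := by
    rw [← act_eq_of_sameCoset hcos, act_mul, D.srefl_apply γ hγ.1, map_sub, map_smul]
  have hlen := hy.length_sub_length hx
  rw [hyx, sub_sub_cancel, map_smul, smul_eq_mul] at hlen
  have hlt : (D.length x : ℚ) < D.length y := by exact_mod_cast bruhatLT.length_lt hxy
  have hc : 0 < D.coroot γ pi := (hpi.coroot_nonneg hγ).lt_of_ne fun h => by
    rw [← h, zero_mul] at hlen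
    linarith
  have hpos : D.IsPosRoot (D.act x γ) := isPosRoot_of_height_pos hxγ (by nlinarith)
  have hyc : D.coroot (D.act x γ) (D.act y pi) = -D.coroot γ pi := by
    rw [hyx, map_sub, map_smul, D.coroot_equivariant x γ hγ.1, D.coroot_self _ hxγ, smul_eq_mul]
    ring
  have := (hy.isPreDominant hpi).coroot_eq_neg_one hpos (by rw [hyc]; linarith)
  linarith

theorem act_eq_add_of_arrow (hpi : D.IsDominant pi) {u t : D.W} {β : D.V}
    (ht : D.IsMinuscule pi t) (h : D.Arrow (D.stab pi) u t β) :
    D.act u pi = D.act t pi + β := by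
  obtain ⟨hβ, hur, -, hcos, hut⟩ := h
  have huw : D.act u pi = D.act t pi - D.coroot β (D.act t pi) • β := by
    rw [← act_eq_of_sameCoset hcos, act_mul, D.srefl_apply β hβ.1]
  have hlen := ht.length_sub_length (hur.isMinuscule_of_bruhatLE hpi ht hut.1)
  rw [huw, sub_sub_cancel_left, map_neg, map_smul, smul_eq_mul] at hlen
  have hlt : (D.length u : ℚ) < D.length t := by exact_mod_cast bruhatLT.length_lt hut
  have hq : D.coroot β (D.act t pi) < 0 := by nlinarith [hβ.one_le_height]
  rw [huw, (ht.isPreDominant hpi).coroot_eq_neg_one hβ hq, neg_one_smul, sub_neg_eq_add]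

theorem act_sub_act_eq_sum_of_arrowPathFromTo (hpi : D.IsDominant pi) {x t : D.W}
    (ht : D.IsMinuscule pi t) {l : List D.V} (h : D.ArrowPathFromTo (D.stab pi) x t l) :
    D.act x pi - D.act t pi = l.sum := by
  induction l generalizing t with
  | nil => rw [show x = t from h, sub_self, List.sum_nil]
  | cons β l ih =>
    obtain ⟨z, hz, hp⟩ := h
    have ⟨_, hzr, _, _, hzt⟩ := hz
    rw [List.sum_cons, ← ih (hzr.isMinuscule_of_bruhatLE hpi ht hzt.1) hp,
      act_eq_add_of_arrow hpi ht hz]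
    abel

end WeylSetting

open WeylSetting

theorem minuscule_graph_properties_general
    (D : WeylSetting) (pi : D.V) (hpi : D.IsDominant pi)
    (v w : D.W) (hw : D.IsMinuscule pi w) :
    (∀ x y : D.W, ∀ γ : D.V,
        D.IsMinRep (D.stab pi) x → D.IsMinRep (D.stab pi) y →
        D.bruhatLE v x → D.bruhatLE x w → D.bruhatLE v y → D.bruhatLE y w →
        D.bruhatLT x y → D.IsPosRoot γ →
        D.SameCoset (D.stab pi) (x * D.srefl γ) y → D.coroot γ pi = 1) ∧
    (∀ x : D.W, D.IsMinRep (D.stab pi) x → D.bruhatLE v x → D.bruhatLE x w →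
        ∀ l : List D.V, D.ArrowPathFromTo (D.stab pi) x w l →
          D.act x pi - D.act w pi = l.sum) ∧
    Set.InjOn (fun x => D.act x pi - D.act w pi)
      {x : D.W | D.IsMinRep (D.stab pi) x ∧ D.bruhatLE v x ∧ D.bruhatLE x w} := by
  have hmin : ∀ x, D.IsMinRep (D.stab pi) x → D.bruhatLE x w → D.IsMinuscule pi x :=
    fun x hx hxw => hx.isMinuscule_of_bruhatLE hpi hw hxw
  refine ⟨fun x y γ hxr hyr _ hxw _ hyw hxy hγ hcos => ?_,
    fun x _ _ _ l hl => act_sub_act_eq_sum_of_arrowPathFromTo hpi hw hl,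
    fun x hx y hy hxy => ?_⟩
  · exact coroot_eq_one_of_sameCoset_mul_srefl hpi (hmin x hxr hxw) (hmin y hyr hyw) hxy hγ hcos
  · exact IsMinRep.eq_of_act_eq hpi (hmin x hx.1 hx.2.2) hx.1 hy.1 (sub_left_injective hxy)

/-- For `π`-minuscule `v < w` and the `Λ`-Bruhat graph on `[v,w]^P` with
constant admissible function `Λ ≡ π`: (1) every edge `x → y` with
`x W_P < y W_P = x s_γ W_P` has Chevalley multiplicity `⟨π, γ∨⟩ = 1`;
(2) every vertex weight `W_π(x) = x(π) - w(π)` equals the sum of the edge roots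
along any directed chain from `x` to `w`; (3) `W_π` is injective on `[v,w]^P`. -/
theorem minuscule_graph_properties
    (D : WeylSetting) (pi : D.V) (hpi : D.IsDominant pi)
    (v w : D.W) (hv : D.IsMinuscule pi v) (hw : D.IsMinuscule pi w)
    (hvr : D.IsMinRep (D.stab pi) v) (hwr : D.IsMinRep (D.stab pi) w)
    (hvw : D.bruhatLT v w) :
    (∀ x y : D.W, ∀ γ : D.V,
        D.IsMinRep (D.stab pi) x → D.IsMinRep (D.stab pi) y →
        D.bruhatLE v x → D.bruhatLE x w → D.bruhatLE v y → D.bruhatLE y w →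
        D.bruhatLT x y → D.IsPosRoot γ →
        D.SameCoset (D.stab pi) (x * D.srefl γ) y → D.coroot γ pi = 1) ∧
    (∀ x : D.W, D.IsMinRep (D.stab pi) x → D.bruhatLE v x → D.bruhatLE x w →
        ∀ l : List D.V, D.ArrowPathFromTo (D.stab pi) x w l →
          D.act x pi - D.act w pi = l.sum) ∧
    Set.InjOn (fun x => D.act x pi - D.act w pi)
      {x : D.W | D.IsMinRep (D.stab pi) x ∧ D.bruhatLE v x ∧ D.bruhatLE x w} :=
  minuscule_graph_properties_general D pi hpi v w hw
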